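/- Let ρ₁ ≥ ρ₂ ≥ ρ₃ ≥ ω and ρ₃ ≥ ρ₄ ≥ 2 be cardinals with ρ₁ > ρ₂ and cf(ρ₁) < ρ₄ = cf(ρ₄). Then cov(ρ₁, ρ₂, ρ₃, ρ₄) = sup { cov(ρ, ρ₂, ρ₃, ρ₄) : ρ₂ ≤ ρ < ρ₁ }. -/

import Mathlib

open Cardinal

noncomputable section

/-- The covering number `cov(ρ₁, ρ₂, ρ₃, ρ₄)`: least cardinality of `X ⊆ P_{ρ₂}(ρ₁)`
such that every `b ∈ P_{ρ₃}(ρ₁)` is covered by the union of fewer than `ρ₄` members of `X`. -/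
def cov (r1 r2 r3 r4 : Cardinal) : Cardinal :=
  sInf { c | ∃ X : Set (Set r1.out),
    (∀ x ∈ X, #x < r2) ∧
    (∀ b : Set r1.out, #b < r3 → ∃ Q : Set (Set r1.out), Q ⊆ X ∧ #Q < r4 ∧ b ⊆ ⋃₀ Q) ∧
    #X = c }

/-- The meeting number `m(ρ, λ)`. -/
def meet (ρ lam : Cardinal) : Cardinal :=
  sInf { c | ∃ Q : Set (Set lam.out),
    (∀ q ∈ Q, #q = ρ) ∧
    (∀ b : Set lam.out, #b = ρ → ∃ q ∈ Q, #(↥(b ∩ q)) = ρ) ∧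
    #Q = c }

/-- The density number `d(ρ, λ)`. -/
def dens (ρ lam : Cardinal) : Cardinal :=
  sInf { c | ∃ Q : Set (Set lam.out),
    (∀ q ∈ Q, #q = ρ) ∧
    (∀ b : Set lam.out, #b = ρ → ∃ q ∈ Q, q ⊆ b) ∧
    #Q = c }

/-- `ds(f)` for `f : λ → ρ`. -/
def ds (ρ lam : Cardinal) (f : lam.out → ρ.out) : Cardinal :=
  sInf { c | ∃ Z : Set (Set lam.out),
    (∀ z ∈ Z, #z = ρ) ∧
    (∀ B : Set lam.out, (∀ α : ρ.out, #(↥(B ∩ f ⁻¹' {α})) = lam) →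
      ∃ z ∈ Z, #(↥(f '' (z ∩ B))) = ρ) ∧
    #Z = c }

/-- The Džamonja–Shelah number `DS(ρ, λ) = sup { ds(f) : f : λ → ρ }`. -/
def DS (ρ lam : Cardinal) : Cardinal := ⨆ f : lam.out → ρ.out, ds ρ lam f

/-- Cofinality of a cardinal. -/
def cf (c : Cardinal) : Cardinal := c.ord.cof

/-- `u(σ, λ) = cov(λ, σ, σ, ω)`. -/
def u (σ lam : Cardinal) : Cardinal := cov lam σ σ ℵ₀

/-- The `o`-th iterated cardinal successor of `c`. -/
def succIter (c : Cardinal) (o : Ordinal) : Cardinal :=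
  Cardinal.preAleph (Cardinal.preAleph.symm c + o)



/-!
Write `ρ₁` as the union of `cf ρ₁` initial segments, each of size `< ρ₁`, and pull back an
optimal covering family from each segment. A set `b` with `|b| < ρ₃` is covered inside each
segment by fewer than `ρ₄` sets, hence by fewer than `ρ₄` sets altogether because `ρ₄` is
regular and `cf ρ₁ < ρ₄`. The glued family has size at most `cf ρ₁ · σ`, where `σ` is the
supremum, and this is `σ` because `σ ≥ cov(ρ₂⁺, …) ≥ ρ₂⁺` (note `ρ₂⁺ < ρ₁` as `ρ₁` is singular).
The other inequality is monotonicity of `cov` in its first argument.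
-/

open Set

universe u

/-- The families competing in the infimum defining `cov`, on an arbitrary type. -/
def IsCovFamily {α : Type u} (r2 r3 r4 : Cardinal.{u}) (X : Set (Set α)) : Prop :=
  (∀ x ∈ X, #x < r2) ∧ ∀ b : Set α, #b < r3 → ∃ Q ⊆ X, #Q < r4 ∧ b ⊆ ⋃₀ Q

namespace IsCovFamily

variable {α β : Type u} {r2 r3 r4 : Cardinal.{u}} {X : Set (Set α)}

theorem setOf_mk_lt (h23 : r3 ≤ r2) (h4 : 1 < r4) :
    IsCovFamily r2 r3 r4 {x : Set α | #x < r2} := by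
  refine ⟨fun x hx => hx, fun b hb => ⟨{b}, ?_, ?_, ?_⟩⟩
  · simpa using hb.trans_le h23
  · simpa using h4
  · simp

theorem preimage (hX : IsCovFamily r2 r3 r4 X) (j : β ↪ α) :
    IsCovFamily r2 r3 r4 ((j ⁻¹' ·) '' X) := by
  refine ⟨?_, fun b hb => ?_⟩
  · rintro _ ⟨x, hx, rfl⟩
    exact (mk_preimage_of_injective j x j.injective).trans_lt (hX.1 x hx)
  · obtain ⟨Q, hQX, hQ, hbQ⟩ := hX.2 (j '' b) (mk_image_le.trans_lt hb)
    refine ⟨(j ⁻¹' ·) '' Q, image_mono hQX, mk_image_le.trans_lt hQ, fun a ha => ?_⟩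
    obtain ⟨q, hq, hjq⟩ := hbQ (mem_image_of_mem j ha)
    exact ⟨j ⁻¹' q, mem_image_of_mem _ hq, hjq⟩

theorem iUnion {ι : Type u} {A : ι → Set α} (hA : ⋃ i, A i = Set.univ) (hι : #ι < r4)
    (hr4 : r4.IsRegular) {Y : ∀ i, Set (Set (A i))} (hY : ∀ i, IsCovFamily r2 r3 r4 (Y i)) :
    IsCovFamily r2 r3 r4 (⋃ i, image Subtype.val '' Y i) := by
  refine ⟨?_, fun b hb => ?_⟩
  · simp only [mem_iUnion, mem_image]
    rintro _ ⟨i, y, hy, rfl⟩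
    exact mk_image_le.trans_lt ((hY i).1 y hy)
  · have hbA : ∀ i, #(Subtype.val ⁻¹' b : Set (A i)) < r3 := fun i =>
      (mk_preimage_of_injective _ _ Subtype.val_injective).trans_lt hb
    choose Q hQY hQ hbQ using fun i => (hY i).2 _ (hbA i)
    refine ⟨⋃ i, image Subtype.val '' Q i, iUnion_mono fun i => image_mono (hQY i), ?_, ?_⟩
    · exact mk_iUnion_le_sum_mk.trans_lt
        (sum_lt_of_isRegular hr4 hι fun i => mk_image_le.trans_lt (hQ i))
    · intro a ha
      obtain ⟨i, hai⟩ := mem_iUnion.1 (hA ▸ Set.mem_univ a)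
      obtain ⟨q, hq, haq⟩ := hbQ i (show (⟨a, hai⟩ : A i) ∈ Subtype.val ⁻¹' b from ha)
      exact ⟨Subtype.val '' q, mem_iUnion.2 ⟨i, mem_image_of_mem _ hq⟩, ⟨_, haq, rfl⟩⟩

theorem mk_le_mul (hX : IsCovFamily r2 r3 r4 X) (h3 : 1 < r3) : #α ≤ #X * r2 := by
  have hcover : ⋃₀ X = Set.univ := eq_univ_of_forall fun a => by
    obtain ⟨Q, hQX, -, haQ⟩ := hX.2 {a} (by simpa using h3)
    obtain ⟨q, hq, haq⟩ := haQ rfl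
    exact ⟨q, hQX hq, haq⟩
  calc #α = #(⋃₀ X) := by rw [hcover, mk_univ]
    _ ≤ #X * ⨆ x : X, #x := mk_sUnion_le X
    _ ≤ #X * r2 := by gcongr; exact ciSup_le' fun x => (hX.1 x x.2).le

end IsCovFamily

section Covering

variable {r2 r3 r4 : Cardinal.{u}}

theorem cov_le_mk {κ : Cardinal.{u}} {X : Set (Set κ.out)} (hX : IsCovFamily r2 r3 r4 X) :
    cov κ r2 r3 r4 ≤ #X :=
  csInf_le' ⟨X, hX.1, hX.2, rfl⟩

theorem exists_isCovFamily_mk_eq_cov (κ : Cardinal.{u}) (h23 : r3 ≤ r2) (h4 : 1 < r4) :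
    ∃ X : Set (Set κ.out), IsCovFamily r2 r3 r4 X ∧ #X = cov κ r2 r3 r4 := by
  have hX := IsCovFamily.setOf_mk_lt (α := κ.out) h23 h4
  obtain ⟨X, hX1, hX2, hX⟩ := csInf_mem (⟨_, _, hX.1, hX.2, rfl⟩ :
    {c | ∃ X : Set (Set κ.out), (∀ x ∈ X, #x < r2) ∧
      (∀ b : Set κ.out, #b < r3 → ∃ Q ⊆ X, #Q < r4 ∧ b ⊆ ⋃₀ Q) ∧ #X = c}.Nonempty)
  exact ⟨X, ⟨hX1, hX2⟩, hX⟩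

theorem exists_isCovFamily_mk_le_cov {α : Type u} {κ : Cardinal.{u}} (hα : #α ≤ κ)
    (h23 : r3 ≤ r2) (h4 : 1 < r4) :
    ∃ X : Set (Set α), IsCovFamily r2 r3 r4 X ∧ #X ≤ cov κ r2 r3 r4 := by
  obtain ⟨X, hX, hXκ⟩ := exists_isCovFamily_mk_eq_cov κ h23 h4
  obtain ⟨j⟩ : Nonempty (α ↪ κ.out) := by rwa [← le_def, mk_out]
  exact ⟨_, hX.preimage j, mk_image_le.trans hXκ.le⟩

theorem cov_mono {κ κ' : Cardinal.{u}} (h : κ ≤ κ') (h23 : r3 ≤ r2) (h4 : 1 < r4) :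
    cov κ r2 r3 r4 ≤ cov κ' r2 r3 r4 := by
  obtain ⟨X, hX, hXκ'⟩ := exists_isCovFamily_mk_le_cov ((mk_out κ).trans_le h) h23 h4
  exact (cov_le_mk hX).trans hXκ'

theorem le_cov {κ : Cardinal.{u}} (h2 : ℵ₀ ≤ r2) (h23 : r3 ≤ r2) (h3 : 1 < r3) (h4 : 1 < r4)
    (hκ : r2 < κ) : κ ≤ cov κ r2 r3 r4 := by
  obtain ⟨X, hX, hXκ⟩ := exists_isCovFamily_mk_eq_cov κ h23 h4
  rw [← hXκ]
  by_contra! hXlt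
  have := (hX.mk_le_mul h3).trans_lt (mul_lt_of_lt (h2.trans hκ.le) hXlt hκ)
  exact this.ne (mk_out κ)

theorem cov_le_sum_cov {κ : Cardinal.{u}} {ι : Type u} (A : ι → Set κ.out)
    (hA : ⋃ i, A i = Set.univ) (hι : #ι < r4) (hr4 : r4.IsRegular) (h23 : r3 ≤ r2) :
    cov κ r2 r3 r4 ≤ sum fun i => cov #(A i) r2 r3 r4 := by
  choose Y hY hYA using fun i =>
    exists_isCovFamily_mk_le_cov (α := A i) le_rfl h23 (one_lt_aleph0.trans_le hr4.aleph0_le)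
  calc cov κ r2 r3 r4 ≤ #(⋃ i, image Subtype.val '' Y i) :=
        cov_le_mk (IsCovFamily.iUnion hA hι hr4 hY)
    _ ≤ sum fun i => #(image Subtype.val '' Y i) := mk_iUnion_le_sum_mk
    _ ≤ sum fun i => cov #(A i) r2 r3 r4 := sum_le_sum _ _ fun i => mk_image_le.trans (hYA i)

end Covering

theorem Cardinal.exists_iUnion_eq_univ_mk_lt {κ : Cardinal.{u}} (hκ : ℵ₀ ≤ κ) :
    ∃ (ι : Type u) (A : ι → Set κ.out),
      #ι = κ.ord.cof ∧ ⋃ i, A i = Set.univ ∧ ∀ i, #(A i) < κ := by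
  obtain ⟨e⟩ : Nonempty (κ.out ≃ κ.ord.ToType) := Cardinal.eq.1 (by simp)
  obtain ⟨S, hS, hSκ⟩ := Order.exists_cof_eq κ.ord.ToType
  refine ⟨S, fun s => e ⁻¹' Iic s.1, by rw [hSκ, Ordinal.cof_toType], ?_, fun s => ?_⟩
  · refine eq_univ_of_forall fun a => ?_
    obtain ⟨s, hs, has⟩ := hS (e a)
    exact mem_iUnion.2 ⟨⟨s, hs⟩, has⟩
  · rw [mk_preimage_equiv]
    simpa using mk_Iic_lt s.1 (by simp) (by simp [hκ])

theorem Cardinal.isRegular_of_cof_ord_eq {c : Cardinal} (h2 : 2 ≤ c) (hc : c.ord.cof = c) :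
    c.IsRegular := by
  refine ⟨?_, hc.ge⟩
  by_contra! hfin
  have hc1 := Ordinal.cof_lt_aleph0_iff.1 (hc ▸ hfin)
  rw [hc] at hc1
  exact absurd (h2.trans hc1) (by norm_num)

theorem stmt11_general (r1 r2 r3 r4 : Cardinal) (h12 : r2 < r1) (h23 : r3 ≤ r2)
    (h34 : r4 ≤ r3) (h4 : 2 ≤ r4)
    (hcf : cf r1 < r4) (hreg : cf r4 = r4) :
    cov r1 r2 r3 r4 = sSup { c | ∃ ρ, r2 ≤ ρ ∧ ρ < r1 ∧ c = cov ρ r2 r3 r4 } := by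
  have hr4 : r4.IsRegular := isRegular_of_cof_ord_eq h4 hreg
  have h24 : 1 < r4 := one_lt_aleph0.trans_le hr4.aleph0_le
  have h2 : ℵ₀ ≤ r2 := hr4.aleph0_le.trans (h34.trans h23)
  set T := { c | ∃ ρ, r2 ≤ ρ ∧ ρ < r1 ∧ c = cov ρ r2 r3 r4 }
  have hT : ∀ ρ, r2 ≤ ρ → ρ < r1 → cov ρ r2 r3 r4 ≤ sSup T := fun ρ hρ hρ1 =>
    le_csSup ⟨cov r1 r2 r3 r4, by rintro _ ⟨ρ, -, hρ, rfl⟩; exact cov_mono hρ.le h23 h24⟩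
      ⟨ρ, hρ, hρ1, rfl⟩
  have hsucc : Order.succ r2 < r1 := by
    refine (Order.succ_le_of_lt h12).lt_of_ne fun h => ?_
    have hcf1 : cf r1 = r1 := h ▸ (isRegular_succ h2).cof_ord
    rw [hcf1] at hcf
    exact h12.not_ge (hcf.le.trans (h34.trans h23))
  have hr2T : r2 ≤ sSup T := (Order.le_succ r2).trans <|
    (le_cov h2 h23 (h24.trans_le h34) h24 (Order.lt_succ r2)).trans (hT _ (Order.le_succ r2) hsucc)
  refine le_antisymm ?_ (csSup_le ⟨_, r2, le_rfl, h12, rfl⟩ ?_)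
  · obtain ⟨ι, A, hι, hA, hAr1⟩ := exists_iUnion_eq_univ_mk_lt (h2.trans h12.le)
    calc cov r1 r2 r3 r4 ≤ sum fun i => cov #(A i) r2 r3 r4 :=
          cov_le_sum_cov A hA (hι.trans_lt hcf) hr4 h23
      _ ≤ sum fun _ : ι => sSup T := sum_le_sum _ _ fun i =>
          (cov_mono (le_max_left _ r2) h23 h24).trans
            (hT _ (le_max_right _ _) (max_lt (hAr1 i) h12))
      _ = #ι * sSup T := sum_const' _ _
      _ ≤ sSup T := (mul_le_max_of_aleph0_le_right (h2.trans hr2T)).trans <|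
          max_le ((hι.trans_lt hcf).le.trans ((h34.trans h23).trans hr2T)) le_rfl
  · rintro _ ⟨ρ, -, hρ, rfl⟩
    exact cov_mono hρ.le h23 h24

theorem stmt11 (r1 r2 r3 r4 : Cardinal) (h12 : r2 < r1) (h23 : r3 ≤ r2)
    (h3 : ℵ₀ ≤ r3) (h34 : r4 ≤ r3) (h4 : 2 ≤ r4)
    (hcf : cf r1 < r4) (hreg : cf r4 = r4) :
    cov r1 r2 r3 r4 = sSup { c | ∃ ρ, r2 ≤ ρ ∧ ρ < r1 ∧ c = cov ρ r2 r3 r4 } :=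
  stmt11_general r1 r2 r3 r4 h12 h23 h34 h4 hcf hreg
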